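/- Let a ≥ 0, ε > 0 and t > 0. Then Σ_{n∈ℤ} Ḣ_n(t)² < 3 + 4/ε + 2π²/(9ε²) + 8 e^{4t/ε} Σ_{n∈ℤ} e^{-2εn²t}. -/

import Mathlib

/-- `h_n = (a + ε n²)/2`. -/
noncomputable def hcoef (a ε : ℝ) (n : ℤ) : ℝ := (a + ε * (n : ℝ) ^ 2) / 2

/-- The real-valued fundamental oscillator solution `H_n(t)`:
`e^{-h t} sinh(ω t)/ω` when `ω² = h² - n² > 0`,
`e^{-h t} sin(|ω| t)/|ω|` when `h² - n² < 0`, and `t e^{-h t}` when `h² = n²`. -/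
noncomputable def Hfun (a ε : ℝ) (n : ℤ) (t : ℝ) : ℝ :=
  if 0 < (hcoef a ε n) ^ 2 - (n : ℝ) ^ 2 then
    Real.exp (-(hcoef a ε n) * t) *
      Real.sinh (Real.sqrt ((hcoef a ε n) ^ 2 - (n : ℝ) ^ 2) * t) /
      Real.sqrt ((hcoef a ε n) ^ 2 - (n : ℝ) ^ 2)
  else if (hcoef a ε n) ^ 2 - (n : ℝ) ^ 2 < 0 then
    Real.exp (-(hcoef a ε n) * t) *
      Real.sin (Real.sqrt ((n : ℝ) ^ 2 - (hcoef a ε n) ^ 2) * t) /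
      Real.sqrt ((n : ℝ) ^ 2 - (hcoef a ε n) ^ 2)
  else Real.exp (-(hcoef a ε n) * t) * t

/-- `n̄ = 1 + ⌊2/ε⌋`. -/
noncomputable def nbar (ε : ℝ) : ℤ := 1 + ⌊(2 : ℝ) / ε⌋

/-!
Write `α = h_n - ω_n`, `β = h_n + ω_n`, so that `αβ = n²`. In the oscillatory and critical
cases `|Ḣ_n(t)| ≤ e^{-h_n t}(1 + h_n t) ≤ 1`; in the overdamped case
`Ḣ_n = (βe^{-βt} - αe^{-αt})/(β - α)` lies between `-min(1, α/(β - α))` and `e^{-βt}`.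

For `|n| > n̄` the mode is overdamped with `α ≤ 2/ε`, `β ≥ εn² - 2/ε` and
`β - α ≥ 4(|n| - n̄)`, hence `Ḣ_n² ≤ e^{4t/ε} e^{-2εn²t} + 1/(4ε²(|n| - n̄)²)`.
Summing `1` over `|n| ≤ n̄` and these bounds over `|n| > n̄` gives at most
`2n̄ + 1 ≤ 3 + 4/ε`, `e^{4t/ε} θ` and `2 · (π²/3)/(4ε²) < 2π²/(9ε²)`, where the last sum is
dominated by two shifted copies of `∑_{n ∈ ℤ} 1/n² = π²/3`.
-/

open Real

section Overdamped

variable {α β t : ℝ}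

noncomputable def overdampedDeriv (α β t : ℝ) : ℝ :=
  (β * exp (-β * t) - α * exp (-α * t)) / (β - α)

lemma hasDerivAt_exp_neg_mul (c t : ℝ) :
    HasDerivAt (fun s => exp (-c * s)) (-c * exp (-c * t)) t := by
  simpa [mul_comm] using ((hasDerivAt_id t).const_mul (-c)).exp

lemma hasDerivAt_overdampedDeriv (α β t : ℝ) :
    HasDerivAt (fun s => (exp (-α * s) - exp (-β * s)) / (β - α)) (overdampedDeriv α β t) t := by
  refine (((hasDerivAt_exp_neg_mul α t).fun_sub (hasDerivAt_exp_neg_mul β t)).div_const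
    (β - α)).congr_deriv ?_
  rw [overdampedDeriv]; ring

lemma overdampedDeriv_le_exp (hα : 0 ≤ α) (hαβ : α < β) (ht : 0 ≤ t) :
    overdampedDeriv α β t ≤ exp (-β * t) := by
  have hexp : exp (-β * t) ≤ exp (-α * t) := exp_le_exp.mpr (by nlinarith)
  rw [overdampedDeriv, div_le_iff₀ (sub_pos.mpr hαβ)]
  nlinarith [mul_le_mul_of_nonneg_left hexp hα]

lemma neg_overdampedDeriv_le_div (hα : 0 ≤ α) (hαβ : α < β) (ht : 0 ≤ t) :
    -overdampedDeriv α β t ≤ α / (β - α) := by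
  have hexp : exp (-α * t) ≤ 1 := exp_le_one_iff.mpr (by nlinarith)
  rw [overdampedDeriv, ← neg_div, div_le_div_iff_of_pos_right (sub_pos.mpr hαβ)]
  nlinarith [mul_le_mul_of_nonneg_left hexp hα, mul_nonneg (hα.trans hαβ.le) (exp_nonneg (-β * t))]

lemma neg_overdampedDeriv_le_one (hα : 0 ≤ α) (hαβ : α < β) :
    -overdampedDeriv α β t ≤ 1 := by
  have hgap : 0 < β - α := sub_pos.mpr hαβ
  -- `αe^{-αt} - βe^{-βt} ≤ α(e^{-αt} - e^{-βt}) ≤ α e^{-αt} (β - α) t`, and `αt e^{-αt} ≤ 1`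
  have hsplit : exp (-β * t) = exp (-α * t) * exp (-((β - α) * t)) := by
    rw [← exp_add]; ring_nf
  have hlin : 1 - exp (-((β - α) * t)) ≤ (β - α) * t := by
    linarith [add_one_le_exp (-((β - α) * t))]
  have hpeak : α * t * exp (-α * t) ≤ 1 := by
    have := add_one_le_exp (α * t)
    rw [neg_mul, exp_neg, mul_inv_le_iff₀ (exp_pos _)]; linarith
  have hexp : 0 ≤ α * exp (-α * t) := mul_nonneg hα (exp_nonneg _)
  rw [overdampedDeriv, ← neg_div, div_le_one hgap, hsplit]
  nlinarith [mul_le_mul_of_nonneg_left hlin hexp, mul_le_mul_of_nonneg_right hpeak hgap.le,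
    mul_nonneg (mul_nonneg hgap.le (exp_nonneg (-α * t))) (exp_nonneg (-((β - α) * t)))]

lemma abs_overdampedDeriv_le_one (hα : 0 ≤ α) (hαβ : α < β) (ht : 0 ≤ t) :
    |overdampedDeriv α β t| ≤ 1 :=
  abs_le.mpr ⟨by linarith [neg_overdampedDeriv_le_one (t := t) hα hαβ],
    (overdampedDeriv_le_exp hα hαβ ht).trans (exp_le_one_iff.mpr (by nlinarith))⟩

lemma sq_overdampedDeriv_le (hα : 0 ≤ α) (hαβ : α < β) (ht : 0 ≤ t) :
    overdampedDeriv α β t ^ 2 ≤ exp (-β * t) ^ 2 + (α / (β - α)) ^ 2 := by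
  have hup := overdampedDeriv_le_exp hα hαβ ht
  have hlow := neg_overdampedDeriv_le_div hα hαβ ht
  have hq : 0 ≤ α / (β - α) := div_nonneg hα (sub_pos.mpr hαβ).le
  rcases le_total 0 (overdampedDeriv α β t) with h0 | h0 <;> nlinarith [exp_nonneg (-β * t)]

end Overdamped

section Rates

variable {ε ν N α β : ℝ}

lemma slow_rate_le (hε : 0 < ε) (hN : 0 < N) (hα : 0 ≤ α) (hαβ : α ≤ β)
    (hprod : α * β = N ^ 2) (hsum : ε * N ^ 2 ≤ α + β) : α ≤ 2 / ε := by
  have hβ : α * (ε * N ^ 2 / 2) ≤ α * β := mul_le_mul_of_nonneg_left (by linarith) hα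
  rw [le_div_iff₀ hε]
  nlinarith [pow_pos hN 2]

lemma fast_rate_ge (hε : 0 < ε) (hN : 0 < N) (hα : 0 ≤ α) (hαβ : α ≤ β)
    (hprod : α * β = N ^ 2) (hsum : ε * N ^ 2 ≤ α + β) : ε * N ^ 2 - 2 / ε ≤ β := by
  linarith [slow_rate_le hε hN hα hαβ hprod hsum]

lemma four_mul_sub_le_rate_gap (hε : 0 < ε) (hν : 2 ≤ ε * ν) (hN : ν ≤ N) (hαβ : α ≤ β)
    (hprod : α * β = N ^ 2) (hsum : ε * N ^ 2 ≤ α + β) : 4 * (N - ν) ≤ β - α := by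
  set m := N - ν
  have hm : 0 ≤ m := sub_nonneg.mpr hN
  have hεN : 2 ≤ ε * N := hν.trans (mul_le_mul_of_nonneg_left hN hε.le)
  have hεm : ε * m ≤ ε * N - 2 := by simp only [m]; linarith
  have hεN2 : 4 * m ≤ ε * N ^ 2 := by
    have hAMGM : 4 * m * ν ≤ N ^ 2 := by nlinarith [sq_nonneg (m - ν)]
    nlinarith [mul_le_mul_of_nonneg_left hAMGM hε.le]
  have hgap_sq : (4 * m) ^ 2 ≤ (β - α) ^ 2 := calc
    (4 * m) ^ 2 ≤ 4 * m * (ε * N ^ 2) := by nlinarith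
    _ = N ^ 2 * (ε * m * 4) := by ring
    _ ≤ N ^ 2 * ((ε * N - 2) * (ε * N + 2)) := by
      gcongr
      linarith
    _ = (ε * N ^ 2) ^ 2 - 4 * N ^ 2 := by ring
    _ ≤ (α + β) ^ 2 - 4 * (α * β) := by
      rw [hprod]; nlinarith [mul_nonneg hε.le (sq_nonneg N)]
    _ = (β - α) ^ 2 := by ring
  exact (pow_le_pow_iff_left₀ (by positivity) (sub_nonneg.mpr hαβ) two_ne_zero).mp hgap_sq

end Rates

section Mode

variable {a ε t : ℝ} {n : ℤ}

noncomputable def omegaCoef (a ε : ℝ) (n : ℤ) : ℝ := √(hcoef a ε n ^ 2 - (n : ℝ) ^ 2)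

lemma hcoef_nonneg (ha : 0 ≤ a) (hε : 0 ≤ ε) (n : ℤ) : 0 ≤ hcoef a ε n := by
  unfold hcoef; positivity

lemma omegaCoef_le_hcoef (ha : 0 ≤ a) (hε : 0 ≤ ε) (n : ℤ) : omegaCoef a ε n ≤ hcoef a ε n :=
  Real.sqrt_le_iff.mpr ⟨hcoef_nonneg ha hε n, by nlinarith [sq_nonneg (n : ℝ)]⟩

lemma sq_omegaCoef (hc : 0 ≤ hcoef a ε n ^ 2 - (n : ℝ) ^ 2) :
    omegaCoef a ε n ^ 2 = hcoef a ε n ^ 2 - (n : ℝ) ^ 2 :=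
  Real.sq_sqrt hc

lemma exp_mul_sinh_div_eq (h w s : ℝ) :
    exp (-h * s) * sinh (w * s) / w =
      (exp (-(h - w) * s) - exp (-(h + w) * s)) / ((h + w) - (h - w)) := by
  rw [sinh_eq, show -(h - w) * s = -h * s + w * s by ring,
    show -(h + w) * s = -h * s + -(w * s) by ring, exp_add, exp_add,
    show (h + w) - (h - w) = 2 * w by ring]
  ring

lemma deriv_Hfun_of_pos (hc : 0 < hcoef a ε n ^ 2 - (n : ℝ) ^ 2) (t : ℝ) :
    deriv (Hfun a ε n) t =
      overdampedDeriv (hcoef a ε n - omegaCoef a ε n) (hcoef a ε n + omegaCoef a ε n) t := by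
  have hH : Hfun a ε n = fun s => (exp (-(hcoef a ε n - omegaCoef a ε n) * s) -
      exp (-(hcoef a ε n + omegaCoef a ε n) * s)) /
      ((hcoef a ε n + omegaCoef a ε n) - (hcoef a ε n - omegaCoef a ε n)) := by
    funext s
    rw [Hfun, if_pos hc, ← exp_mul_sinh_div_eq]
    rfl
  rw [hH]
  exact (hasDerivAt_overdampedDeriv _ _ t).deriv

lemma deriv_Hfun_of_neg (hc : hcoef a ε n ^ 2 - (n : ℝ) ^ 2 < 0) (t : ℝ) :
    deriv (Hfun a ε n) t =
      exp (-hcoef a ε n * t) * (cos (√((n : ℝ) ^ 2 - hcoef a ε n ^ 2) * t) -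
        hcoef a ε n * sin (√((n : ℝ) ^ 2 - hcoef a ε n ^ 2) * t) /
          √((n : ℝ) ^ 2 - hcoef a ε n ^ 2)) := by
  set h := hcoef a ε n
  set w := √((n : ℝ) ^ 2 - h ^ 2)
  have hw : w ≠ 0 := (Real.sqrt_pos.mpr (by linarith)).ne'
  have hH : Hfun a ε n = fun s => exp (-h * s) * sin (w * s) / w := by
    funext s
    rw [Hfun, if_neg hc.not_gt, if_pos hc]
  have hsin : HasDerivAt (fun s => sin (w * s)) (cos (w * t) * w) t := by
    simpa [mul_comm] using ((hasDerivAt_id t).const_mul w).sin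
  rw [hH, (((hasDerivAt_exp_neg_mul h t).fun_mul hsin).div_const w).deriv]
  field_simp
  ring

lemma deriv_Hfun_of_eq (hc : hcoef a ε n ^ 2 - (n : ℝ) ^ 2 = 0) (t : ℝ) :
    deriv (Hfun a ε n) t = exp (-hcoef a ε n * t) * (1 - hcoef a ε n * t) := by
  have hH : Hfun a ε n = fun s => exp (-hcoef a ε n * s) * s := by
    funext s
    rw [Hfun, if_neg hc.not_gt, if_neg hc.not_lt]
  rw [hH, ((hasDerivAt_exp_neg_mul _ t).fun_mul (hasDerivAt_id' t)).deriv]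
  ring

lemma exp_neg_mul_one_add_le_one (x : ℝ) : exp (-x) * (1 + x) ≤ 1 := by
  have := add_one_le_exp x
  rw [exp_neg, inv_mul_le_iff₀ (exp_pos x)]
  linarith

lemma abs_deriv_Hfun_le_one (ha : 0 ≤ a) (hε : 0 ≤ ε) (n : ℤ) (ht : 0 ≤ t) :
    |deriv (Hfun a ε n) t| ≤ 1 := by
  have hh := hcoef_nonneg ha hε n
  have hht : 0 ≤ hcoef a ε n * t := mul_nonneg hh ht
  have hpeak := exp_neg_mul_one_add_le_one (hcoef a ε n * t)
  rw [← neg_mul] at hpeak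
  rcases lt_trichotomy (hcoef a ε n ^ 2 - (n : ℝ) ^ 2) 0 with hc | hc | hc
  · rw [deriv_Hfun_of_neg hc]
    set w := √((n : ℝ) ^ 2 - hcoef a ε n ^ 2)
    have hw : 0 < w := Real.sqrt_pos.mpr (by linarith)
    have hsin : |sin (w * t)| ≤ w * t := by
      simpa [abs_of_nonneg (mul_nonneg hw.le ht)] using abs_sin_le_abs (x := w * t)
    have hbracket : |cos (w * t) - hcoef a ε n * sin (w * t) / w| ≤ 1 + hcoef a ε n * t := by
      refine (abs_sub _ _).trans (add_le_add (abs_cos_le_one _) ?_)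
      rw [abs_div, abs_mul, abs_of_nonneg hh, abs_of_pos hw, div_le_iff₀ hw]
      nlinarith [mul_le_mul_of_nonneg_left hsin hh]
    rw [abs_mul, abs_of_pos (exp_pos _)]
    exact (mul_le_mul_of_nonneg_left hbracket (exp_pos _).le).trans hpeak
  · rw [deriv_Hfun_of_eq hc, abs_mul, abs_of_pos (exp_pos _)]
    refine le_trans (mul_le_mul_of_nonneg_left ?_ (exp_pos _).le) hpeak
    exact abs_le.mpr ⟨by linarith, by linarith⟩
  · rw [deriv_Hfun_of_pos hc]
    have hω : 0 < omegaCoef a ε n := Real.sqrt_pos.mpr hc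
    exact abs_overdampedDeriv_le_one (by linarith [omegaCoef_le_hcoef ha hε n]) (by linarith) ht

lemma sq_deriv_Hfun_le_of_nbar_lt (ha : 0 ≤ a) (hε : 0 < ε) (hn : nbar ε < |n|) (ht : 0 ≤ t) :
    deriv (Hfun a ε n) t ^ 2 ≤
      exp (4 * t / ε) * exp (-2 * ε * n ^ 2 * t) + 1 / (|(n : ℝ)| - nbar ε) ^ 2 / (4 * ε ^ 2) := by
  set N := |(n : ℝ)|
  set ν : ℝ := (nbar ε : ℝ)
  have hν : 2 ≤ ε * ν := by
    have hfloor := Int.lt_floor_add_one (2 / ε)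
    have : 2 / ε < ν := by simp only [ν, nbar]; push_cast; linarith
    rw [div_lt_iff₀ hε] at this; linarith
  have hνN : ν < N := by simp only [ν, N]; rw [← Int.cast_abs]; exact_mod_cast hn
  have hN : 0 < N := lt_trans (by nlinarith) hνN
  have hnN : (n : ℝ) ^ 2 = N ^ 2 := (sq_abs _).symm
  have hh : ε * N ^ 2 / 2 ≤ hcoef a ε n := by unfold hcoef; rw [hnN]; linarith
  have hc : 0 < hcoef a ε n ^ 2 - (n : ℝ) ^ 2 := by
    have hεN : 2 < ε * N := by nlinarith
    have : N < hcoef a ε n := by nlinarith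
    nlinarith
  have hω2 := sq_omegaCoef hc.le
  have hω : 0 < omegaCoef a ε n := Real.sqrt_pos.mpr hc
  have hα : 0 ≤ hcoef a ε n - omegaCoef a ε n := by linarith [omegaCoef_le_hcoef ha hε.le n]
  rw [deriv_Hfun_of_pos hc]
  set h := hcoef a ε n
  set ω := omegaCoef a ε n
  have hαβ : h - ω ≤ h + ω := by linarith
  have hprod : (h - ω) * (h + ω) = N ^ 2 := by nlinarith
  have hsum : ε * N ^ 2 ≤ (h - ω) + (h + ω) := by linarith
  refine (sq_overdampedDeriv_le hα (by linarith) ht).trans (add_le_add ?_ ?_)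
  · have hfast := fast_rate_ge hε hN hα hαβ hprod hsum
    rw [sq, ← exp_add, ← exp_add, exp_le_exp, hnN]
    have : (ε * N ^ 2 - 2 / ε) * t ≤ (h + ω) * t := mul_le_mul_of_nonneg_right hfast ht
    linear_combination 2 * this
  · have hslow := slow_rate_le hε hN hα hαβ hprod hsum
    have hgap := four_mul_sub_le_rate_gap hε hν hνN.le hαβ hprod hsum
    have hm : 0 < N - ν := sub_pos.mpr hνN
    calc ((h - ω) / ((h + ω) - (h - ω))) ^ 2 ≤ (2 / ε / (4 * (N - ν))) ^ 2 := by
          gcongr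
      _ = 1 / (N - ν) ^ 2 / (4 * ε ^ 2) := by field_simp; ring

end Mode

lemma one_div_sq_abs_sub_le (x y : ℝ) : 1 / (|x| - y) ^ 2 ≤ 1 / (x - y) ^ 2 + 1 / (x + y) ^ 2 := by
  rcases abs_cases x with ⟨hx, -⟩ | ⟨hx, -⟩
  · rw [hx]
    linarith [show 0 ≤ 1 / (x + y) ^ 2 by positivity]
  · rw [hx, show (-x - y) ^ 2 = (x + y) ^ 2 by ring]
    linarith [show 0 ≤ 1 / (x - y) ^ 2 by positivity]

-- The `n = 0` term is `1 / 0 = 0`.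
lemma hasSum_one_div_int_sq : HasSum (fun n : ℤ => 1 / (n : ℝ) ^ 2) (π ^ 2 / 3) := by
  have hpos : HasSum (fun n : ℕ => 1 / ((n : ℝ) + 1) ^ 2) (π ^ 2 / 6) := by
    simpa using (hasSum_nat_add_iff' 1).mpr hasSum_zeta_two
  convert HasSum.of_add_one_of_neg_add_one (f := fun n : ℤ => 1 / (n : ℝ) ^ 2)
    (by simpa using hpos) (hpos.congr_fun fun n => by push_cast; ring) using 1
  rw [Int.cast_zero, zero_pow two_ne_zero, div_zero]
  ring

lemma hasSum_one_div_int_add_sq (k : ℤ) :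
    HasSum (fun n : ℤ => 1 / ((n : ℝ) + k) ^ 2) (π ^ 2 / 3) := by
  simpa [Function.comp_def] using (Equiv.addRight k).hasSum_iff.mpr hasSum_one_div_int_sq

lemma summable_exp_neg_mul_int_sq {c : ℝ} (hc : 0 < c) :
    Summable fun n : ℤ => exp (-c * n ^ 2) := by
  refine (summable_pow_mul_jacobiTheta₂_term_bound 0 (div_pos hc pi_pos) 0).congr fun n => ?_
  simp only [pow_zero, one_mul, mul_zero, zero_mul, sub_zero]
  field_simp

lemma card_Icc_nbar_le {ε : ℝ} (hε : 0 ≤ ε) :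
    ((Finset.Icc (-nbar ε) (nbar ε)).card : ℝ) ≤ 3 + 4 / ε := by
  have hfloor : 0 ≤ ⌊2 / ε⌋ := Int.floor_nonneg.mpr (by positivity)
  have hcard : ((Finset.Icc (-nbar ε) (nbar ε)).card : ℤ) = 2 * nbar ε + 1 := by
    rw [Int.card_Icc]; unfold nbar; omega
  have hcardR : ((Finset.Icc (-nbar ε) (nbar ε)).card : ℝ) = 2 * (nbar ε : ℝ) + 1 := by
    exact_mod_cast hcard
  rw [hcardR, nbar]
  push_cast
  linarith [Int.floor_le (2 / ε), show 4 / ε = 2 * (2 / ε) by ring]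

section Majorant

variable {a ε t : ℝ}

noncomputable def derivSqMajorant (ε t : ℝ) (n : ℤ) : ℝ :=
  Set.indicator (Finset.Icc (-nbar ε) (nbar ε) : Set ℤ) 1 n +
    exp (4 * t / ε) * exp (-2 * ε * n ^ 2 * t) +
    (1 / ((n : ℝ) - nbar ε) ^ 2 + 1 / ((n : ℝ) + nbar ε) ^ 2) / (4 * ε ^ 2)

lemma sq_deriv_Hfun_le_derivSqMajorant (ha : 0 ≤ a) (hε : 0 < ε) (ht : 0 ≤ t) (n : ℤ) :
    deriv (Hfun a ε n) t ^ 2 ≤ derivSqMajorant ε t n := by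
  have hΘ : 0 ≤ exp (4 * t / ε) * exp (-2 * ε * n ^ 2 * t) := by positivity
  have hshift :
      0 ≤ (1 / ((n : ℝ) - nbar ε) ^ 2 + 1 / ((n : ℝ) + nbar ε) ^ 2) / (4 * ε ^ 2) := by
    positivity
  rw [derivSqMajorant]
  by_cases hn : |n| ≤ nbar ε
  · have hmem : n ∈ (Finset.Icc (-nbar ε) (nbar ε) : Set ℤ) := by simpa [abs_le] using hn
    have hone := (sq_le_one_iff_abs_le_one _).mpr (abs_deriv_Hfun_le_one ha hε.le n ht)
    rw [Set.indicator_of_mem hmem, Pi.one_apply]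
    linarith
  · have hmem : n ∉ (Finset.Icc (-nbar ε) (nbar ε) : Set ℤ) := by simpa [abs_le] using hn
    have htail := sq_deriv_Hfun_le_of_nbar_lt ha hε (not_le.mp hn) ht
    have hsplit := div_le_div_of_nonneg_right (one_div_sq_abs_sub_le (n : ℝ) (nbar ε))
      (by positivity : (0 : ℝ) ≤ 4 * ε ^ 2)
    rw [Set.indicator_of_notMem hmem]
    linarith

lemma hasSum_derivSqMajorant (hΘ : Summable fun n : ℤ => exp (-2 * ε * n ^ 2 * t)) :
    HasSum (derivSqMajorant ε t)
      ((Finset.Icc (-nbar ε) (nbar ε)).card +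
        exp (4 * t / ε) * ∑' n : ℤ, exp (-2 * ε * n ^ 2 * t) + π ^ 2 / (6 * ε ^ 2)) := by
  have hind : HasSum (Set.indicator (Finset.Icc (-nbar ε) (nbar ε) : Set ℤ) (1 : ℤ → ℝ))
      (Finset.Icc (-nbar ε) (nbar ε)).card := by
    have h : HasSum (Set.indicator (Finset.Icc (-nbar ε) (nbar ε) : Set ℤ) (1 : ℤ → ℝ)) _ :=
      hasSum_sum_of_ne_finset_zero (s := Finset.Icc (-nbar ε) (nbar ε))
      (fun b hb => Set.indicator_of_notMem (Finset.mem_coe.not.mpr hb) (1 : ℤ → ℝ))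
    rw [Finset.sum_congr rfl fun b hb => Set.indicator_of_mem (Finset.mem_coe.mpr hb) _] at h
    simpa only [Pi.one_apply, Finset.sum_const, nsmul_eq_mul, mul_one] using h
  have hshift := ((hasSum_one_div_int_add_sq (-nbar ε)).add
    (hasSum_one_div_int_add_sq (nbar ε))).div_const (4 * ε ^ 2)
  convert (hind.add (hΘ.hasSum.mul_left (exp (4 * t / ε)))).add hshift using 1
  · funext n
    simp [derivSqMajorant, sub_eq_add_neg]
  · ring

end Majorant

theorem stmt17 (a ε : ℝ) (ha : 0 ≤ a) (hε : 0 < ε) (t : ℝ) (ht : 0 < t) :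
    Summable (fun n : ℤ => (deriv (Hfun a ε n) t) ^ 2) ∧
    Summable (fun n : ℤ => Real.exp (-2 * ε * (n : ℝ) ^ 2 * t)) ∧
    (∑' n : ℤ, (deriv (Hfun a ε n) t) ^ 2) <
      3 + 4 / ε + 2 * Real.pi ^ 2 / (9 * ε ^ 2) +
        8 * Real.exp (4 * t / ε) * (∑' n : ℤ, Real.exp (-2 * ε * (n : ℝ) ^ 2 * t)) := by
  have hΘ : Summable fun n : ℤ => exp (-2 * ε * (n : ℝ) ^ 2 * t) :=
    (summable_exp_neg_mul_int_sq (by positivity : 0 < 2 * ε * t)).congr fun n => by ring_nf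
  have hM := hasSum_derivSqMajorant hΘ
  have hle := sq_deriv_Hfun_le_derivSqMajorant ha hε ht.le
  have hS : Summable fun n : ℤ => deriv (Hfun a ε n) t ^ 2 :=
    hM.summable.of_nonneg_of_le (fun n => sq_nonneg _) hle
  refine ⟨hS, hΘ, (hasSum_le hle hS.hasSum hM).trans_lt ?_⟩
  have hcard := card_Icc_nbar_le hε.le
  have hpi : π ^ 2 / (6 * ε ^ 2) < 2 * π ^ 2 / (9 * ε ^ 2) := by
    rw [div_lt_div_iff₀ (by positivity) (by positivity)]
    nlinarith [pow_pos pi_pos 2, pow_pos hε 2]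
  have hθ : 0 ≤ exp (4 * t / ε) * ∑' n : ℤ, exp (-2 * ε * (n : ℝ) ^ 2 * t) :=
    mul_nonneg (exp_nonneg _) (tsum_nonneg fun n => exp_nonneg _)
  linarith
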